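/- Dodgson condensation computes determinants of matrices with nonzero connected minors: if A is an n × n matrix over a field such that every contiguous square submatrix (rows i..i+k, columns j..j+k) has nonzero determinant, then the iterated condensation recurrence D^{(k)}_{i,j} = (D^{(k−1)}_{i,j}·D^{(k−1)}_{i+1,j+1} − D^{(k−1)}_{i,j+1}·D^{(k−1)}_{i+1,j}) / D^{(k−2)}_{i+1,j+1} satisfies D^{(k)}_{i,j} = det of the (k+1)×(k+1) contiguous submatrix of A with top-left corner (i,j), where D^{(−1)} ≡ 1 and D^{(0)}_{i,j} = a_{i,j}. -/

import Mathlib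

/-!
Each condensation step is the Desnanot–Jacobi identity
`det M · det M° = det M_NW · det M_SE - det M_NE · det M_SW` (with `M°` the interior of `M` and
`M_NW`, … its four maximal corner minors) applied to a contiguous submatrix: its corner minors and
its interior are again contiguous submatrices, and the hypothesis on the interior minor makes the
division in the recurrence exact.

When `det M ≠ 0`, Desnanot–Jacobi follows by multiplying `M` with the identity matrix whose first
and last columns are replaced by those of `adj M`: the product is `M` with these two columns
replaced by `det M` times unit vectors. The general case follows from the generic matrix over
`ℤ[X_ij]`, whose determinant is nonzero.
-/

/-- The Dodgson condensation array `D^(k)`, defined by the recurrence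
`D^(k) i j = (D^(k-1) i j · D^(k-1) (i+1) (j+1) − D^(k-1) i (j+1) · D^(k-1) (i+1) j)
/ D^(k-2) (i+1) (j+1)`, with `D^(-1) ≡ 1` and `D^(0) i j = a i j`. -/
def condD {K : Type*} [Field K] (a : ℕ → ℕ → K) : ℕ → ℕ → ℕ → K
  | 0, i, j => a i j
  | 1, i, j => a i j * a (i + 1) (j + 1) - a i (j + 1) * a (i + 1) j
  | k + 2, i, j =>
      (condD a (k + 1) i j * condD a (k + 1) (i + 1) (j + 1) -
        condD a (k + 1) i (j + 1) * condD a (k + 1) (i + 1) j) /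
          condD a k (i + 1) (j + 1)

namespace Matrix

variable {R : Type*} [CommRing R]

theorem det_eq_det_submatrix_succAbove_of_col_eq_one {n : ℕ}
    (M : Matrix (Fin (n + 1)) (Fin (n + 1)) R) (j : Fin (n + 1))
    (hj : ∀ i, M i j = (1 : Matrix _ _ R) i j) :
    M.det = (M.submatrix j.succAbove j.succAbove).det := by
  rw [det_succ_column M j, Finset.sum_eq_single j]
  · simp [hj, ← two_mul, pow_mul]
  · intro i _ hi
    simp [hj, hi]
  · simp

theorem det_eq_corner_det_of_middle_col_eq_one {k : ℕ}
    (P : Matrix (Fin (k + 2)) (Fin (k + 2)) R)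
    (h : ∀ i j, j ≠ 0 → j ≠ Fin.last (k + 1) → P i j = (1 : Matrix _ _ R) i j) :
    P.det = P 0 0 * P (Fin.last _) (Fin.last _) - P 0 (Fin.last _) * P (Fin.last _) 0 := by
  induction k with
  | zero => rw [det_fin_two]; rfl
  | succ k ih =>
    have h10 : (1 : Fin (k + 3)) ≠ 0 := by simp
    have h1l : (1 : Fin (k + 3)) ≠ Fin.last _ := by simp [Fin.ext_iff]
    rw [det_eq_det_submatrix_succAbove_of_col_eq_one P 1 (h · 1 h10 h1l), ih]
    · simp [Fin.succAbove_ne_zero_zero h10, h1l]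
    · intro i j hj0 hjl
      rw [submatrix_apply,
        h _ _ (Fin.succAbove_ne_zero h10 hj0) (Fin.succAbove_ne_last h1l hjl)]
      simp only [one_apply, Fin.succAbove_right_inj]

theorem desnanot_jacobi_of_det_ne_zero [IsDomain R] {k : ℕ}
    (M : Matrix (Fin (k + 2)) (Fin (k + 2)) R) (hM : M.det ≠ 0) :
    M.det * ((M.submatrix Fin.succ Fin.succ).submatrix Fin.castSucc Fin.castSucc).det =
      (M.submatrix Fin.castSucc Fin.castSucc).det * (M.submatrix Fin.succ Fin.succ).det -
        (M.submatrix Fin.castSucc Fin.succ).det * (M.submatrix Fin.succ Fin.castSucc).det := by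
  have h0l : (0 : Fin (k + 2)) ≠ Fin.last _ := Fin.last_pos.ne
  let e (j : Fin (k + 2)) : Fin (k + 2) → R := Pi.single j 1
  let P := ((1 : Matrix (Fin (k + 2)) (Fin (k + 2)) R).updateCol 0 (M.cramer (e 0))).updateCol
    (Fin.last _) (M.cramer (e (Fin.last _)))
  let Q := (M.updateCol 0 (e 0)).updateCol (Fin.last _) (e (Fin.last _))
  have hMP : M * P =
      (M.updateCol 0 (M.det • e 0)).updateCol (Fin.last _) (M.det • e (Fin.last _)) := by
    simp only [P, mul_updateCol, mul_one, mulVec_cramer]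
  have hdetMP : (M * P).det = M.det * (M.det * Q.det) := by
    rw [hMP, det_updateCol_smul, updateCol_comm _ h0l, det_updateCol_smul,
      updateCol_comm _ h0l.symm]
  have hQ : Q.det = ((M.submatrix Fin.succ Fin.succ).submatrix Fin.castSucc Fin.castSucc).det := by
    rw [det_eq_det_submatrix_succAbove_of_col_eq_one Q 0
        (by simp [Q, h0l, e, one_apply, Pi.single_apply]),
      det_eq_det_submatrix_succAbove_of_col_eq_one _ (Fin.last k) ?_]
    · congr 1
      ext i j
      simp [Q, Fin.succ_ne_zero, (Fin.castSucc_lt_last _).ne]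
    · intro i
      simp [Q, one_apply, e, Pi.single_apply]
  have hP : P.det = M.adjugate 0 0 * M.adjugate (Fin.last _) (Fin.last _) -
      M.adjugate 0 (Fin.last _) * M.adjugate (Fin.last _) 0 := by
    rw [det_eq_corner_det_of_middle_col_eq_one P ?_]
    · simp [P, h0l, e, cramer_eq_adjugate_mulVec]
    · intro i j hj0 hjl
      simp [P, hj0, hjl]
  have hPQ : P.det = M.det * Q.det := mul_left_cancel₀ hM (by rw [← det_mul, hdetMP])
  rw [← hQ, ← hPQ, hP]
  simp only [adjugate_fin_succ_eq_det_submatrix, Fin.succAbove_zero, Fin.succAbove_last,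
    Fin.val_zero, Fin.val_last, add_zero, zero_add]
  ring_nf
  simp only [pow_mul', neg_one_sq, one_pow, mul_one]

theorem desnanot_jacobi {k : ℕ} (M : Matrix (Fin (k + 2)) (Fin (k + 2)) R) :
    M.det * ((M.submatrix Fin.succ Fin.succ).submatrix Fin.castSucc Fin.castSucc).det =
      (M.submatrix Fin.castSucc Fin.castSucc).det * (M.submatrix Fin.succ Fin.succ).det -
        (M.submatrix Fin.castSucc Fin.succ).det * (M.submatrix Fin.succ Fin.castSucc).det := by
  have hX := desnanot_jacobi_of_det_ne_zero _ (det_mvPolynomialX_ne_zero (Fin (k + 2)) ℤ)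
  have := congrArg (MvPolynomial.eval₂Hom (Int.castRingHom R) fun p => M p.1 p.2) hX
  simpa only [map_mul, map_sub, RingHom.map_det, RingHom.mapMatrix_apply, ← submatrix_map,
    MvPolynomial.coe_eval₂Hom, mvPolynomialX_map_eval₂] using this

end Matrix

def contiguousSubmatrix {α : Type*} (a : ℕ → ℕ → α) (i j k : ℕ) :
    Matrix (Fin (k + 1)) (Fin (k + 1)) α :=
  Matrix.of fun s t => a (i + s) (j + t)

section contiguousSubmatrix

variable {α : Type*} (a : ℕ → ℕ → α) (i j k : ℕ)

@[simp]
theorem contiguousSubmatrix_submatrix_castSucc_castSucc :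
    (contiguousSubmatrix a i j (k + 1)).submatrix Fin.castSucc Fin.castSucc =
      contiguousSubmatrix a i j k := by
  ext s t
  simp [contiguousSubmatrix]

@[simp]
theorem contiguousSubmatrix_submatrix_succ_succ :
    (contiguousSubmatrix a i j (k + 1)).submatrix Fin.succ Fin.succ =
      contiguousSubmatrix a (i + 1) (j + 1) k := by
  ext s t
  simp [contiguousSubmatrix, add_right_comm, add_assoc]

@[simp]
theorem contiguousSubmatrix_submatrix_castSucc_succ :
    (contiguousSubmatrix a i j (k + 1)).submatrix Fin.castSucc Fin.succ =
      contiguousSubmatrix a i (j + 1) k := by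
  ext s t
  simp [contiguousSubmatrix, add_right_comm, add_assoc]

@[simp]
theorem contiguousSubmatrix_submatrix_succ_castSucc :
    (contiguousSubmatrix a i j (k + 1)).submatrix Fin.succ Fin.castSucc =
      contiguousSubmatrix a (i + 1) j k := by
  ext s t
  simp [contiguousSubmatrix, add_right_comm, add_assoc]

end contiguousSubmatrix

theorem desnanot_jacobi_contiguousSubmatrix {R : Type*} [CommRing R] (a : ℕ → ℕ → R)
    (i j k : ℕ) :
    (contiguousSubmatrix a i j (k + 2)).det * (contiguousSubmatrix a (i + 1) (j + 1) k).det =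
      (contiguousSubmatrix a i j (k + 1)).det *
          (contiguousSubmatrix a (i + 1) (j + 1) (k + 1)).det -
        (contiguousSubmatrix a i (j + 1) (k + 1)).det *
          (contiguousSubmatrix a (i + 1) j (k + 1)).det := by
  simpa using Matrix.desnanot_jacobi (contiguousSubmatrix a i j (k + 2))

theorem condensation_computes_det {K : Type*} [Field K] (n : ℕ)
    (a : ℕ → ℕ → K)
    (h : ∀ k i j, i + k < n → j + k < n →
      (Matrix.of fun s t : Fin (k + 1) => a (i + s) (j + t)).det ≠ 0) :
    ∀ k i j, i + k < n → j + k < n →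
      condD a k i j = (Matrix.of fun s t : Fin (k + 1) => a (i + s) (j + t)).det := by
  intro k
  induction k using Nat.strong_induction_on with
  | _ k ih =>
    rcases k with _ | _ | k
    · intro i j _ _
      simp [condD]
    · intro i j _ _
      simp [condD, Matrix.det_fin_two]
    · intro i j hi hj
      have hinterior := h k (i + 1) (j + 1) (by omega) (by omega)
      rw [condD, ih (k + 1) (by omega) i j (by omega) (by omega),
        ih (k + 1) (by omega) (i + 1) (j + 1) (by omega) (by omega),
        ih (k + 1) (by omega) i (j + 1) (by omega) (by omega),
        ih (k + 1) (by omega) (i + 1) j (by omega) (by omega),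
        ih k (by omega) (i + 1) (j + 1) (by omega) (by omega), div_eq_iff hinterior]
      exact (desnanot_jacobi_contiguousSubmatrix a i j k).symm
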